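/- Asymptotic density for 2N-dependent oriented percolation started from the full configuration (Theorem 3.6): Let N ∈ ℕ and θ ∈ (0, 1), and let (ω(x, n))_{(x,n)∈𝓛} be a family of {0,1}-valued random variables that is 2N-dependent with density at least 1 − θ. For n ≥ 0 define W_n = {y ∈ ℤ : (y, n) ∈ 𝓛 and (x, 0) → (y, n) for some even integer x} (the oriented percolation process started from the trivial initial state W₀ = 2ℤ). If θ ≤ 6^{−4(4N+1)²}, then liminf_{n→∞} P[0 ∈ W_{2n}] ≥ 19/20. -/

import Mathlib

open MeasureTheory Filter
open scoped ENNReal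

/-- `(x, m) → (y, n)`: there is an open oriented path in the percolation structure
given by the open-site events `op`. -/
def Reaches {Ω : Type*} (op : ℤ → ℕ → Set Ω) (ω : Ω) (x : ℤ) (m : ℕ) (y : ℤ) (n : ℕ) : Prop :=
  ∃ f : ℕ → ℤ, f m = x ∧ f n = y ∧
    (∀ k, m < k → k ≤ n → f k - f (k - 1) = 1 ∨ f k - f (k - 1) = -1) ∧
    (∀ k, m ≤ k → k ≤ n → ω ∈ op (f k) k)

/-- The family of open-site events `op` (indexed by the sites of
`𝓛 = {(x, n) : x + n even}`) is `2N`-dependent with density at least `1 - θ`. -/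
def TwoNDependentDensity {Ω : Type*} {m0 : MeasurableSpace Ω} (P : Measure Ω)
    (N : ℕ) (θ : ℝ) (op : ℤ → ℕ → Set Ω) : Prop :=
  ∀ I : Finset (ℤ × ℕ),
    (∀ p ∈ I, Even (p.1 + (p.2 : ℤ))) →
    (∀ p ∈ I, ∀ q ∈ I, p ≠ q →
      (2 * N : ℤ) < max |p.1 - q.1| |(p.2 : ℤ) - (q.2 : ℤ)|) →
    P (⋂ p ∈ I, (op p.1 p.2)ᶜ) ≤ ENNReal.ofReal (θ ^ I.card)

/-!
Rotate `𝓛` by 45°: the site `(u, v) ∈ ℤ²` stands for `(u - v, u + v) ∈ 𝓛`, so that oriented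
paths take unit steps up or to the right, start on the line `u + v = 0`, and `(0, 2n)` becomes
`(n, n)`. If `(n, n)` is not reached, the set `D` of sites reached from `(n, n)` by down or left
steps out of open sites is finite and lies above that line. Following the boundary of `D` gives a
closed walk of some length `l`, determined by its `l` turns (three choices each). A potential
shows that half of its steps point down or left, and each of those starts at a closed site; a
site starts at most two of them, so the walk passes through at least `l / 4` closed sites, of
which a `(4N + 1)⁻²` fraction are pairwise `2N`-separated. The Peierls sum
`∑ₗ 3ˡ θ^⌈l / 4(4N + 1)²⌉` is then at most `1/20`.
-/

namespace Finset

lemma card_eq_two_mul_card_filter_eq_neg_one {ι : Type*} (s : Finset ι) (f : ι → ℤ)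
    (hf : ∀ i ∈ s, f i = 1 ∨ f i = -1) (hsum : ∑ i ∈ s, f i = 0) :
    #s = 2 * #{i ∈ s | f i = -1} := by
  have h : ∀ i ∈ s, 1 - f i = 2 * if f i = -1 then 1 else 0 := fun i hi => by
    rcases hf i hi with h | h <;> simp [h]
  have := sum_congr rfl h
  rw [sum_sub_distrib, hsum, ← mul_sum, sum_boole, sum_const, sub_zero, nsmul_one] at this
  exact_mod_cast this

lemma exists_pairwise_subset_card_le_mul {α : Type*} [DecidableEq α] (r : α → α → Prop)
    [DecidableRel r] [Std.Symm r] [Std.Irrefl r] (K : ℕ) (S : Finset α)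
    (hK : ∀ a ∈ S, #{b ∈ S | ¬ r a b} ≤ K) :
    ∃ T ⊆ S, (T : Set α).Pairwise r ∧ #S ≤ K * #T := by
  induction S using Finset.strongInduction with
  | H S ih =>
  rcases S.eq_empty_or_nonempty with rfl | ⟨a, ha⟩
  · exact ⟨∅, empty_subset _, by simp, by simp⟩
  set B := {b ∈ S | ¬ r a b}
  have haB : a ∈ B := mem_filter.2 ⟨ha, irrefl a⟩
  obtain ⟨T, hTS, hT, hcard⟩ := ih (S \ B) (sdiff_ssubset (filter_subset _ _) ⟨a, haB⟩)
    fun b hb => (card_le_card (filter_subset_filter _ sdiff_subset)).trans (hK b (mem_sdiff.1 hb).1)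
  have hfar : ∀ b ∈ T, r a b := fun b hb => by
    by_contra h
    exact (mem_sdiff.1 (hTS hb)).2 (mem_filter.2 ⟨(mem_sdiff.1 (hTS hb)).1, h⟩)
  have haT : a ∉ T := fun h => irrefl a (hfar a h)
  refine ⟨insert a T, insert_subset ha (hTS.trans sdiff_subset), ?_, ?_⟩
  · rw [coe_insert, Set.pairwise_insert_of_symm]
    exact ⟨hT, fun b hb _ => hfar b hb⟩
  · have := card_sdiff_add_card_eq_card (filter_subset (fun b => ¬ r a b) S)
    rw [card_insert_of_notMem haT, mul_add_one]
    linarith [hK a ha]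

end Finset

section Reaches

variable {Ω : Type*} {op : ℤ → ℕ → Set Ω} {ω : Ω}

lemma Reaches.refl {x : ℤ} {m : ℕ} (h : ω ∈ op x m) : Reaches op ω x m x m :=
  ⟨fun _ => x, rfl, rfl, fun _ _ _ => by omega, fun k hk hk' => by rwa [le_antisymm hk' hk]⟩

lemma Reaches.succ {x y z : ℤ} {m n : ℕ} (h : Reaches op ω x m y n) (hmn : m ≤ n)
    (hyz : z - y = 1 ∨ z - y = -1) (hz : ω ∈ op z (n + 1)) : Reaches op ω x m z (n + 1) := by
  obtain ⟨f, hfm, hfn, hstep, hopen⟩ := h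
  refine ⟨fun k => if k ≤ n then f k else z, by simp [hmn, hfm], by simp, fun k hk hk' => ?_,
    fun k hk hk' => ?_⟩
  · rcases hk'.lt_or_eq with hk' | rfl
    · simpa [Nat.le_of_lt_succ hk', show k - 1 ≤ n by omega] using hstep k hk (by omega)
    · simpa [hfn] using hyz
  · rcases hk'.lt_or_eq with hk' | rfl
    · simpa [Nat.le_of_lt_succ hk'] using hopen k hk (by omega)
    · simpa using hz

end Reaches

namespace OrientedPercolation

open Finset Function

abbrev Site := ℤ × ℤ

abbrev Dart := Site × Site

def dirs : Finset Site := {(1, 0), (0, 1), (-1, 0), (0, -1)}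

def rot (d : Site) : Site := (-d.2, d.1)

lemma rot_rot (d : Site) : rot (rot d) = -d := by
  simp [rot, Prod.ext_iff]

lemma rot_neg (d : Site) : rot (-d) = -rot d := by
  simp [rot]

lemma rot_mem_dirs {d : Site} (hd : d ∈ dirs) : rot d ∈ dirs := by
  simp only [dirs, mem_insert, mem_singleton] at hd ⊢
  rcases hd with rfl | rfl | rfl | rfl <;> simp [rot]

lemma neg_mem_dirs {d : Site} (hd : d ∈ dirs) : -d ∈ dirs := by
  simpa [rot_rot] using rot_mem_dirs (rot_mem_dirs hd)

section Contour

def IsDart (D : Set Site) (x : Dart) : Prop :=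
  x.1 ∈ D ∧ x.1 + x.2 ∉ D ∧ x.2 ∈ dirs

def step (x : Dart) : Fin 3 → Dart
  | 0 => (x.1, rot x.2)
  | 1 => (x.1 + rot x.2, x.2)
  | 2 => (x.1 + rot x.2 + x.2, -rot x.2)

-- How the boundary of `D`, traversed with `D` on the left, continues after the dart `x`.
open Classical in
noncomputable def turn (D : Set Site) (x : Dart) : Fin 3 :=
  if x.1 + rot x.2 ∈ D then if x.1 + rot x.2 + x.2 ∈ D then 2 else 1 else 0

noncomputable def next (D : Set Site) (x : Dart) : Dart :=
  step x (turn D x)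

open Classical in
noncomputable def prev (D : Set Site) (x : Dart) : Dart :=
  if x.1 - rot x.2 ∈ D then
    if x.1 - rot x.2 + x.2 ∈ D then (x.1 - rot x.2 + x.2, rot x.2) else (x.1 - rot x.2, x.2)
  else (x.1, -rot x.2)

variable {D : Set Site}

lemma mapsTo_next : Set.MapsTo (next D) {x | IsDart D x} {x | IsDart D x} := by
  rintro ⟨s, d⟩ ⟨hs, hsd, hd⟩
  simp only [next, turn]
  split_ifs with h₁ h₂
  · refine ⟨h₂, ?_, neg_mem_dirs (rot_mem_dirs hd)⟩
    simpa [step, add_assoc] using hsd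
  · exact ⟨h₁, h₂, hd⟩
  · exact ⟨hs, h₁, rot_mem_dirs hd⟩

lemma leftInvOn_prev_next : Set.LeftInvOn (prev D) (next D) {x | IsDart D x} := by
  rintro ⟨s, d⟩ ⟨hs, hsd, -⟩
  simp only [next, turn]
  split_ifs with h₁ h₂
  · simp [step, prev, rot_neg, rot_rot, h₁, hs]
  · simp [step, prev, hsd, hs]
  · simp [step, prev, rot_rot, hsd]

lemma mem_periodicPts_next (hD : D.Finite) {a : Dart} (ha : IsDart D a) :
    a ∈ periodicPts (next D) := by
  have : Finite {x | IsDart D x} :=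
    ((hD.prod dirs.finite_toSet).subset fun x hx => ⟨hx.1, hx.2.2⟩).to_subtype
  have hsemi : Semiconj Subtype.val (mapsTo_next.restrict (next D) _ _) (next D) :=
    fun _ => rfl
  exact hsemi.mapsTo_periodicPts
    ((mapsTo_next.restrict_inj.2 leftInvOn_prev_next.injOn).mem_periodicPts ⟨a, ha⟩)

def slope (d : Site) : ℤ := d.1 + d.2

-- Each step changes `height` by the slope of the current direction, so a closed walk has as
-- many steps of slope `-1` as of slope `1`.
def height (x : Dart) : ℤ := x.1.2 - x.1.1 - x.2.1

lemma height_step (x : Dart) (j : Fin 3) : height (step x j) = height x + slope x.2 := by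
  fin_cases j <;> simp [step, height, slope, rot] <;> ring

lemma slope_eq_one_or_eq_neg_one {d : Site} (hd : d ∈ dirs) : slope d = 1 ∨ slope d = -1 := by
  simp only [dirs, mem_insert, mem_singleton] at hd
  rcases hd with rfl | rfl | rfl | rfl <;> simp [slope]

def walk (a : Dart) {l : ℕ} (t : Fin l → Fin 3) : ℕ → Dart
  | 0 => a
  | i + 1 => if h : i < l then step (walk a t i) (t ⟨i, h⟩) else walk a t i

def downSites (a : Dart) {l : ℕ} (t : Fin l → Fin 3) : Finset Site :=
  {i ∈ range l | slope (walk a t i).2 = -1}.image fun i => (walk a t i).1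

variable {a : Dart} {l : ℕ} {t : Fin l → Fin 3}

lemma two_mul_card_downward (hclosed : walk a t l = a) (hdirs : ∀ i < l, (walk a t i).2 ∈ dirs) :
    2 * #{i ∈ range l | slope (walk a t i).2 = -1} = l := by
  have hsum : ∑ i ∈ range l, slope (walk a t i).2 = 0 := by
    have hstep : ∀ i ∈ range l,
        slope (walk a t i).2 = height (walk a t (i + 1)) - height (walk a t i) := by
      intro i hi
      simp [walk, mem_range.1 hi, height_step]
    rw [sum_congr rfl hstep, sum_range_sub (fun i => height (walk a t i)), hclosed, walk, sub_self]
  rw [← card_eq_two_mul_card_filter_eq_neg_one _ _ _ hsum, card_range]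
  exact fun i hi => slope_eq_one_or_eq_neg_one (hdirs i (mem_range.1 hi))

lemma card_downward_le (hinj : (Set.Iio l).InjOn (walk a t))
    (hdirs : ∀ i < l, (walk a t i).2 ∈ dirs) :
    #{i ∈ range l | slope (walk a t i).2 = -1} ≤ 2 * #(downSites a t) := by
  have hmaps : ∀ i ∈ {i ∈ range l | slope (walk a t i).2 = -1},
      walk a t i ∈ downSites a t ×ˢ ({(-1, 0), (0, -1)} : Finset Site) := by
    intro i hi
    obtain ⟨hil, hslope⟩ := mem_filter.1 hi
    refine mem_product.2 ⟨mem_image_of_mem _ hi, ?_⟩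
    have hd := hdirs i (mem_range.1 hil)
    simp only [dirs, mem_insert, mem_singleton] at hd
    rcases hd with h | h | h | h <;> simp_all [slope]
  refine (card_le_card_of_injOn _ hmaps fun i hi j hj hij => ?_).trans ?_
  · exact hinj (mem_range.1 (mem_filter.1 hi).1) (mem_range.1 (mem_filter.1 hj).1) hij
  · simp [card_product, mul_comm]

theorem exists_contour (hD : D.Finite) (ha : IsDart D a) :
    ∃ l, 0 < l ∧ ∃ t : Fin l → Fin 3,
      (∀ i < l, IsDart D (walk a t i)) ∧ l ≤ 4 * #(downSites a t) := by
  set l := minimalPeriod (next D) a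
  set t : Fin l → Fin 3 := fun i => turn D ((next D)^[i] a)
  have hwalk : ∀ i ≤ l, walk a t i = (next D)^[i] a := by
    intro i
    induction i with
    | zero => intro; rfl
    | succ i ih =>
      intro hi
      simp [walk, show i < l by omega, ih (by omega), t, next, iterate_succ_apply']
  have hdart : ∀ i < l, IsDart D (walk a t i) := fun i hi =>
    hwalk i hi.le ▸ mapsTo_next.iterate i ha
  have hdirs : ∀ i < l, (walk a t i).2 ∈ dirs := fun i hi => (hdart i hi).2.2
  have hinj : (Set.Iio l).InjOn (walk a t) :=
    iterate_injOn_Iio_minimalPeriod.congr fun i hi => (hwalk i (le_of_lt hi)).symm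
  have hclosed : walk a t l = a := (hwalk l le_rfl).trans iterate_minimalPeriod
  refine ⟨l, minimalPeriod_pos_of_mem_periodicPts (mem_periodicPts_next hD ha), t, hdart, ?_⟩
  have := two_mul_card_downward hclosed hdirs
  have := card_downward_le hinj hdirs
  omega

end Contour

def upDirs : Finset Site := {(1, 0), (0, 1)}

inductive DownCluster (Op : Site → Prop) (p : Site) : Site → Prop
  | apex : DownCluster Op p p
  | down {s : Site} (e : Site) : DownCluster Op p s → Op s → e ∈ upDirs → DownCluster Op p (s - e)

structure WetClosed (Op : Site → Prop) (W : Set Site) : Prop where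
  base : ∀ s : Site, s.1 + s.2 = 0 → Op s → s ∈ W
  up : ∀ s ∈ W, ∀ e ∈ upDirs, Op (s + e) → s + e ∈ W

section DownCluster

variable {Op : Site → Prop} {W : Set Site} {p s : Site}

lemma DownCluster.le (h : DownCluster Op p s) : s ≤ p := by
  induction h with
  | apex => rfl
  | down e _ _ he ih =>
    simp only [upDirs, mem_insert, mem_singleton] at he
    rw [Prod.le_def] at ih ⊢
    rcases he with rfl | rfl <;> simp only [Prod.fst_sub, Prod.snd_sub] <;> omega

lemma DownCluster.notMem (hW : WetClosed Op W) (hp : p ∉ W) (h : DownCluster Op p s) :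
    s ∉ W := by
  induction h with
  | apex => exact hp
  | down e _ hop he ih => exact fun hs => ih (by simpa using hW.up _ hs e he (by simpa using hop))

lemma DownCluster.nonneg (hW : WetClosed Op W) (hp : p ∉ W) (hp0 : 0 ≤ p.1 + p.2)
    (h : DownCluster Op p s) : 0 ≤ s.1 + s.2 := by
  induction h with
  | apex => exact hp0
  | @down s e hs hop he ih =>
    have : s.1 + s.2 ≠ 0 := fun h0 => hs.notMem hW hp (hW.base s h0 hop)
    simp only [upDirs, mem_insert, mem_singleton] at he
    rcases he with rfl | rfl <;> simp only [Prod.fst_sub, Prod.snd_sub] <;> omega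

lemma finite_downCluster (hW : WetClosed Op W) (hp : p ∉ W) (hp0 : 0 ≤ p.1 + p.2) :
    {s | DownCluster Op p s}.Finite :=
  (Set.finite_Icc (-p.2, -p.1) p).subset fun s hs =>
    have hle := hs.le
    have hnn := hs.nonneg hW hp hp0
    ⟨⟨by linarith [hle.2], by linarith [hle.1]⟩, hle⟩

lemma isDart_apex : IsDart {s | DownCluster Op p s} (p, (0, 1)) :=
  ⟨.apex, fun h => by simpa using h.le.2, by simp [dirs]⟩

lemma not_op_of_isDart {x : Dart} (hx : IsDart {s | DownCluster Op p s} x)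
    (hslope : slope x.2 = -1) : ¬ Op x.1 := by
  obtain ⟨hs, hsd, hd⟩ := hx
  refine fun hop => hsd ?_
  have : -x.2 ∈ upDirs := by
    simp only [dirs, mem_insert, mem_singleton] at hd
    rcases hd with h | h | h | h <;> simp_all [slope, upDirs]
  simpa using DownCluster.down (-x.2) hs hop this

theorem exists_closed_contour (hW : WetClosed Op W) (hp : p ∉ W) (hp0 : 0 ≤ p.1 + p.2) :
    ∃ l, 0 < l ∧ ∃ t : Fin l → Fin 3,
      (∀ s ∈ downSites (p, (0, 1)) t, ¬ Op s ∧ 0 ≤ s.1 + s.2) ∧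
      l ≤ 4 * #(downSites (p, (0, 1)) t) := by
  obtain ⟨l, hl, t, hdart, hcard⟩ := exists_contour (finite_downCluster hW hp hp0) isDart_apex
  refine ⟨l, hl, t, ?_, hcard⟩
  simp only [downSites, mem_image, mem_filter, mem_range]
  rintro _ ⟨i, ⟨hi, hslope⟩, rfl⟩
  exact ⟨not_op_of_isDart (hdart i hi) hslope, (hdart i hi).1.nonneg hW hp hp0⟩

end DownCluster

def Separated (N : ℕ) (p q : ℤ × ℕ) : Prop :=
  (2 * N : ℤ) < max |p.1 - q.1| |(p.2 : ℤ) - (q.2 : ℤ)|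

instance (N : ℕ) : DecidableRel (Separated N) := fun _ _ => by unfold Separated; infer_instance

instance (N : ℕ) : Std.Symm (Separated N) where
  symm p q h := by rwa [Separated, abs_sub_comm q.1, abs_sub_comm (q.2 : ℤ)]

instance (N : ℕ) : Std.Irrefl (Separated N) where
  irrefl p := by simp [Separated]

lemma card_filter_not_separated_le (N : ℕ) (a : ℤ × ℕ) (S : Finset (ℤ × ℕ)) :
    #{q ∈ S | ¬ Separated N a q} ≤ (4 * N + 1) ^ 2 := by
  set I := Icc (-(2 * N : ℤ)) (2 * N)
  have hmaps : ∀ q ∈ {q ∈ S | ¬ Separated N a q}, (q.1 - a.1, (q.2 : ℤ) - a.2) ∈ I ×ˢ I := by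
    intro q hq
    have h := (mem_filter.1 hq).2
    simp only [Separated, not_lt, max_le_iff, abs_le] at h
    simp only [I, mem_product, mem_Icc]
    omega
  refine (card_le_card_of_injOn _ hmaps fun q _ q' _ h => ?_).trans ?_
  · simp only [Prod.mk.injEq] at h
    ext <;> omega
  · rw [card_product, Int.card_Icc, sq, show (2 * N + 1 - -(2 * N : ℤ)).toNat = 4 * N + 1 by omega]

theorem _root_.TwoNDependentDensity.measure_biInter_compl_le {Ω : Type*} {m0 : MeasurableSpace Ω}
    {P : Measure Ω} {N : ℕ} {θ : ℝ} {op : ℤ → ℕ → Set Ω} (hdep : TwoNDependentDensity P N θ op)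
    (hθ0 : 0 ≤ θ) (hθ1 : θ ≤ 1) {S : Finset (ℤ × ℕ)} (hS : ∀ p ∈ S, Even (p.1 + (p.2 : ℤ))) :
    P (⋂ p ∈ S, (op p.1 p.2)ᶜ) ≤ ENNReal.ofReal θ ^ (#S ⌈/⌉ (4 * N + 1) ^ 2) := by
  obtain ⟨T, hTS, hT, hcard⟩ := exists_pairwise_subset_card_le_mul (Separated N) _ S
    fun a _ => card_filter_not_separated_le N a S
  calc P (⋂ p ∈ S, (op p.1 p.2)ᶜ) ≤ P (⋂ p ∈ T, (op p.1 p.2)ᶜ) :=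
        measure_mono (Set.biInter_subset_biInter_left hTS)
    _ ≤ ENNReal.ofReal (θ ^ #T) := hdep T (fun p hp => hS p (hTS hp)) fun p hp q hq => hT hp hq
    _ ≤ ENNReal.ofReal θ ^ (#S ⌈/⌉ (4 * N + 1) ^ 2) := by
      rw [ENNReal.ofReal_pow hθ0]
      exact pow_le_pow_of_le_one zero_le (ENNReal.ofReal_le_one.2 hθ1)
        ((ceilDiv_le_iff_le_mul (by positivity)).2 hcard)

section Lattice

variable {Ω : Type*} {op : ℤ → ℕ → Set Ω} {ω : Ω}

def toLattice (s : Site) : ℤ × ℕ := (s.1 - s.2, (s.1 + s.2).toNat)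

variable (op ω) in
def openSite (s : Site) : Prop := ω ∈ op (toLattice s).1 (toLattice s).2

variable (op ω) in
def wetSites : Set Site :=
  {s | 0 ≤ s.1 + s.2 ∧ ∃ x, Even x ∧ Reaches op ω x 0 (toLattice s).1 (toLattice s).2}

lemma wetClosed_wetSites : WetClosed (openSite op ω) (wetSites op ω) where
  base s h0 hop := ⟨h0.ge, s.1 - s.2, ⟨s.1, by omega⟩,
    by simpa [toLattice, h0] using Reaches.refl hop⟩
  up := by
    rintro s ⟨hs0, x, hx, hr⟩ e he hop
    have he' : e.1 + e.2 = 1 ∧ (e.1 - e.2 = 1 ∨ e.1 - e.2 = -1) := by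
      simp only [upDirs, mem_insert, mem_singleton] at he
      rcases he with rfl | rfl <;> simp
    have hnat : (toLattice (s + e)).2 = (toLattice s).2 + 1 := by
      simp only [toLattice, Prod.fst_add, Prod.snd_add]
      omega
    rw [openSite, hnat] at hop
    refine ⟨by simp only [Prod.fst_add, Prod.snd_add]; omega, x, hx, ?_⟩
    rw [hnat]
    exact hr.succ zero_le (by simp only [toLattice, Prod.fst_add, Prod.snd_add]; omega) hop

variable (op) in
def allClosed (C : Finset Site) : Set Ω :=
  ⋂ q ∈ C.image toLattice, (op q.1 q.2)ᶜ

def contourCandidates (a : Dart) (l : ℕ) : Finset (Fin l → Fin 3) :=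
  {t | (∀ s ∈ downSites a t, 0 ≤ s.1 + s.2) ∧ l ≤ 4 * #(downSites a t)}

lemma compl_reaches_subset (n : ℕ) :
    {ω | ∃ x : ℤ, Even x ∧ Reaches op ω x 0 0 (2 * n)}ᶜ ⊆
      ⋃ l, ⋃ t ∈ contourCandidates ((n, n), (0, 1)) (l + 1),
        allClosed op (downSites ((n, n), (0, 1)) t) := by
  intro ω hω
  have hn : ((n : ℤ) + n).toNat = 2 * n := by omega
  have hdry : ((n : ℤ), (n : ℤ)) ∉ wetSites op ω := fun ⟨_, x, hx, hr⟩ =>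
    hω ⟨x, hx, by simpa [toLattice, hn] using hr⟩
  obtain ⟨l, hl, t, hclosed, hcard⟩ :=
    exists_closed_contour wetClosed_wetSites hdry (by positivity)
  obtain ⟨l, rfl⟩ : ∃ l', l = l' + 1 := ⟨l - 1, by omega⟩
  simp only [Set.mem_iUnion, allClosed, set_biInter_finset_image]
  refine ⟨l, t, mem_filter.2 ⟨mem_univ _, fun s hs => (hclosed s hs).2, hcard⟩, ?_⟩
  simpa [openSite] using fun s hs => (hclosed s hs).1

variable {m0 : MeasurableSpace Ω} {P : Measure Ω} {N : ℕ} {θ : ℝ}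

lemma measure_allClosed_le (hdep : TwoNDependentDensity P N θ op) (hθ0 : 0 ≤ θ) (hθ1 : θ ≤ 1)
    {a : Dart} {l : ℕ} {t : Fin l → Fin 3} (ht : t ∈ contourCandidates a l) :
    P (allClosed op (downSites a t)) ≤ ENNReal.ofReal θ ^ (l ⌈/⌉ (4 * (4 * N + 1) ^ 2)) := by
  set C := downSites a t
  obtain ⟨hC, hcard⟩ := (mem_filter.1 ht).2
  have hinj : Set.InjOn toLattice C := fun s hs s' hs' h => by
    simp only [toLattice, Prod.mk.injEq] at h
    have := hC s hs
    have := hC s' hs'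
    ext <;> omega
  have heven : ∀ q ∈ C.image toLattice, Even (q.1 + (q.2 : ℤ)) := by
    simp only [mem_image]
    rintro _ ⟨s, hs, rfl⟩
    exact ⟨s.1, by simp only [toLattice]; have := hC s hs; omega⟩
  have hC' : #C ≤ (4 * N + 1) ^ 2 * (#C ⌈/⌉ (4 * N + 1) ^ 2) :=
    le_smul_ceilDiv (by positivity : 0 < (4 * N + 1) ^ 2)
  refine (hdep.measure_biInter_compl_le hθ0 hθ1 heven).trans
    (pow_le_pow_of_le_one zero_le (ENNReal.ofReal_le_one.2 hθ1) ?_)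
  rw [card_image_of_injOn hinj, ceilDiv_le_iff_le_mul (by positivity)]
  linarith

theorem measure_compl_reaches_le (hdep : TwoNDependentDensity P N θ op) (hθ0 : 0 ≤ θ)
    (hθ1 : θ ≤ 1) (n : ℕ) :
    P {ω | ∃ x : ℤ, Even x ∧ Reaches op ω x 0 0 (2 * n)}ᶜ ≤
      ∑' l : ℕ, 3 ^ (l + 1) * ENNReal.ofReal θ ^ ((l + 1) ⌈/⌉ (4 * (4 * N + 1) ^ 2)) := by
  set a : Dart := (((n : ℤ), (n : ℤ)), (0, 1))
  calc _ ≤ ∑' l, ∑ t ∈ contourCandidates a (l + 1), P (allClosed op (downSites a t)) :=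
        (measure_mono (compl_reaches_subset n)).trans ((measure_iUnion_le _).trans
          (ENNReal.tsum_le_tsum fun l => measure_biUnion_finset_le _ _))
    _ ≤ _ := ENNReal.tsum_le_tsum fun l =>
        (sum_le_card_nsmul _ _ _ fun t ht => measure_allClosed_le hdep hθ0 hθ1 ht).trans <| by
          rw [nsmul_eq_mul]
          gcongr
          exact_mod_cast (card_le_univ _).trans (by simp)

end Lattice

lemma three_pow_mul_pow_ceilDiv_le {M : ℕ} (hM : 0 < M) {c : ℝ≥0∞} (hc : c ≤ (6 ^ M)⁻¹)
    (l : ℕ) : 3 ^ l * c ^ (l ⌈/⌉ M) ≤ 2⁻¹ ^ (M * (l ⌈/⌉ M)) := by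
  have h6 : (3 : ℝ≥0∞) ^ M * (6 ^ M)⁻¹ = 2⁻¹ ^ M := by
    rw [ENNReal.inv_pow, ← mul_pow, show (6 : ℝ≥0∞) = 3 * 2 by norm_num,
      ENNReal.mul_inv (by simp) (by simp), ← mul_assoc,
      ENNReal.mul_inv_cancel (by simp) (by simp), one_mul]
  calc 3 ^ l * c ^ (l ⌈/⌉ M) ≤ (3 ^ M) ^ (l ⌈/⌉ M) * ((6 ^ M)⁻¹) ^ (l ⌈/⌉ M) := by
        rw [← pow_mul]
        gcongr
        · norm_num
        · simpa using le_smul_ceilDiv (b := l) hM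
    _ = 2⁻¹ ^ (M * (l ⌈/⌉ M)) := by rw [← mul_pow, h6, pow_mul]

lemma tsum_inv_two_pow_mul_ceilDiv_le {M : ℕ} (hM : 0 < M) :
    ∑' l : ℕ, (2⁻¹ : ℝ≥0∞) ^ (M * ((l + 1) ⌈/⌉ M)) ≤ (M + 1) * 2⁻¹ ^ M := by
  have hle : ∀ l, l + 1 ≤ M * ((l + 1) ⌈/⌉ M) := fun l => by
    simpa using le_smul_ceilDiv (b := l + 1) hM
  have hhead : ∀ l ∈ range M, (2⁻¹ : ℝ≥0∞) ^ (M * ((l + 1) ⌈/⌉ M)) ≤ 2⁻¹ ^ M := fun l _ =>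
    pow_le_pow_right_of_le_one' (by norm_num) (Nat.le_mul_of_pos_right M
      (Nat.pos_of_ne_zero fun h => by have := hle l; rw [h] at this; omega))
  have htail : ∀ j, (2⁻¹ : ℝ≥0∞) ^ (M * ((j + M + 1) ⌈/⌉ M)) ≤ 2⁻¹ ^ M * 2⁻¹ ^ (j + 1) :=
    fun j => by
      rw [← pow_add]
      exact pow_le_pow_right_of_le_one' (by norm_num) (by linarith [hle (j + M)])
  calc _ = ∑ l ∈ range M, (2⁻¹ : ℝ≥0∞) ^ (M * ((l + 1) ⌈/⌉ M)) +
        ∑' j, (2⁻¹ : ℝ≥0∞) ^ (M * ((j + M + 1) ⌈/⌉ M)) :=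
        ENNReal.summable.sum_add_tsum_nat_add'.symm
    _ ≤ ∑ _ ∈ range M, (2⁻¹ : ℝ≥0∞) ^ M + ∑' j, 2⁻¹ ^ M * 2⁻¹ ^ (j + 1) :=
        add_le_add (sum_le_sum hhead) (ENNReal.tsum_le_tsum htail)
    _ = (M + 1) * 2⁻¹ ^ M := by
      rw [ENNReal.tsum_mul_left, ENNReal.tsum_geometric_add_one, ENNReal.one_sub_inv_two,
        ENNReal.mul_inv_cancel (by simp) (by simp), sum_const, card_range, nsmul_eq_mul]
      ring

lemma add_one_mul_inv_two_pow_le {M : ℕ} (hM : 8 ≤ M) : (M + 1) * (2⁻¹ : ℝ≥0∞) ^ M ≤ 20⁻¹ := by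
  have hnat : 20 * (M + 1) ≤ 2 ^ M := by
    induction M, hM using Nat.le_induction with
    | base => norm_num
    | succ M _ ih => rw [pow_succ]; omega
  rw [ENNReal.le_inv_iff_mul_le]
  calc (M + 1) * (2⁻¹ : ℝ≥0∞) ^ M * 20 = ((20 * (M + 1) : ℕ) : ℝ≥0∞) * 2⁻¹ ^ M := by
        push_cast; ring
    _ ≤ 2 ^ M * 2⁻¹ ^ M := by gcongr; exact_mod_cast hnat
    _ = 1 := by rw [← mul_pow, ENNReal.mul_inv_cancel (by simp) (by simp), one_pow]

lemma tsum_three_pow_mul_pow_ceilDiv_le {M : ℕ} (hM : 8 ≤ M) {c : ℝ≥0∞} (hc : c ≤ (6 ^ M)⁻¹) :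
    ∑' l : ℕ, 3 ^ (l + 1) * c ^ ((l + 1) ⌈/⌉ M) ≤ 20⁻¹ :=
  (ENNReal.tsum_le_tsum fun l => three_pow_mul_pow_ceilDiv_le (by omega) hc (l + 1)).trans <|
    (tsum_inv_two_pow_mul_ceilDiv_le (by omega)).trans (add_one_mul_inv_two_pow_le hM)

end OrientedPercolation

open OrientedPercolation

theorem density_2N_dependent_percolation_full_start_general
    {Ω : Type*} {m0 : MeasurableSpace Ω} (P : Measure Ω) [IsProbabilityMeasure P]
    (N : ℕ) (hN : 0 < N) (θ : ℝ) (hθ : θ ∈ Set.Ioo (0 : ℝ) 1)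
    (op : ℤ → ℕ → Set Ω)
    (hdep : TwoNDependentDensity P N θ op)
    (hsmall : θ ≤ (6 : ℝ) ^ (-(4 : ℝ) * (4 * (N : ℝ) + 1) ^ 2)) :
    (19 / 20 : ℝ≥0∞) ≤
      Filter.liminf
        (fun n : ℕ => P {ω | ∃ x : ℤ, Even x ∧ Reaches op ω x 0 0 (2 * n)})
        Filter.atTop := by
  obtain ⟨hθ0, hθ1⟩ := hθ
  have hM : 8 ≤ 4 * (4 * N + 1) ^ 2 := by nlinarith
  rw [neg_mul, Real.rpow_neg (by norm_num)] at hsmall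
  norm_cast at hsmall
  have hc : ENNReal.ofReal θ ≤ (6 ^ (4 * (4 * N + 1) ^ 2))⁻¹ := by
    refine (ENNReal.ofReal_le_ofReal hsmall).trans_eq ?_
    rw [ENNReal.ofReal_inv_of_pos (by positivity), ENNReal.ofReal_natCast]
    norm_num
  have hfail (n : ℕ) : P {ω | ∃ x : ℤ, Even x ∧ Reaches op ω x 0 0 (2 * n)}ᶜ ≤ 20⁻¹ :=
    (measure_compl_reaches_le hdep hθ0.le hθ1.le n).trans (tsum_three_pow_mul_pow_ceilDiv_le hM hc)
  have h19 : (19 / 20 : ℝ≥0∞) = 1 - 20⁻¹ := by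
    refine ENNReal.eq_sub_of_add_eq (by simp) ?_
    rw [← one_div, ENNReal.div_add_div_same, show (19 : ℝ≥0∞) + 1 = 20 by norm_num]
    exact ENNReal.div_self (by norm_num) (by norm_num)
  refine le_liminf_of_le (by isBoundedDefault) (Eventually.of_forall fun n => ?_)
  rw [h19, tsub_le_iff_right, ← measure_univ (μ := P)]
  exact (measure_univ_le_add_compl _).trans (add_le_add le_rfl (hfail n))

/-- Asymptotic density for `2N`-dependent oriented percolation started from the full
configuration `W₀ = 2ℤ` (Theorem 3.6): if `θ ≤ 6^{-4(4N+1)²}` then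
`liminf_{n→∞} P[0 ∈ W_{2n}] ≥ 19/20`. -/
theorem density_2N_dependent_percolation_full_start
    {Ω : Type*} {m0 : MeasurableSpace Ω} (P : Measure Ω) [IsProbabilityMeasure P]
    (N : ℕ) (hN : 0 < N) (θ : ℝ) (hθ : θ ∈ Set.Ioo (0 : ℝ) 1)
    (op : ℤ → ℕ → Set Ω) (hmeas : ∀ x n, MeasurableSet (op x n))
    (hdep : TwoNDependentDensity P N θ op)
    (hsmall : θ ≤ (6 : ℝ) ^ (-(4 : ℝ) * (4 * (N : ℝ) + 1) ^ 2)) :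
    (19 / 20 : ℝ≥0∞) ≤
      Filter.liminf
        (fun n : ℕ => P {ω | ∃ x : ℤ, Even x ∧ Reaches op ω x 0 0 (2 * n)})
        Filter.atTop :=
  density_2N_dependent_percolation_full_start_general (m0 := m0) P N hN θ hθ op hdep hsmall
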